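/- arXiv:2504.21523 — 3 statements merged into one kernel-verified Lean document; each statement's English description precedes it below -/
import Mathlib

section
/- Let 0 < α < 1. For every real s with 0 < s < 1 one has ∫₀¹ (x s / (1 - (1-x)s)) · x^{α-1}(1-x)^{-α} / (Γ(α)Γ(1-α)) dx = 1 - (1-s)^α. (In probabilistic terms: if B has the Beta(α, 1-α) distribution and, conditionally on B = p, Y is geometric on {1,2,…} with success probability p, then the probability generating function of Y is the Sibuya generating function 1-(1-s)^α, i.e. Y has the Sibuya distribution with parameter α.) -/
/-!
Since `x s / (1 - (1 - x) s) = 1 - (1 - s) / (1 - (1 - x) s)`, the integral is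
`1 - (1 - s) / B(α, 1 - α) · ∫₀¹ x^(α-1) (1-x)^(-α) / (1 - (1 - x) s) dx`.
The Möbius substitution `u = x / (1 - (1 - x) s)` maps `(0, 1)` onto itself and turns the Beta
kernel `u^(a-1) (1-u)^(b-1) du` into `(1 - s)^b x^(a-1) (1-x)^(b-1) (1 - (1 - x) s)^(-(a+b)) dx`;
for `a + b = 1` the remaining integral is therefore `B(α, 1 - α) / (1 - s)^(1-α)`.
-/

open Real Set MeasureTheory intervalIntegral

noncomputable def genBinom (a : ℝ) (k : ℕ) : ℝ :=
  (∏ j ∈ Finset.range k, (a - (j : ℝ))) / (Nat.factorial k : ℝ)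

theorem integral_rpow_mul_one_sub_rpow {a b : ℝ} (ha : 0 < a) (hb : 0 < b) :
    ∫ x in (0:ℝ)..1, x ^ (a - 1) * (1 - x) ^ (b - 1) = ProbabilityTheory.beta a b := by
  have h : Complex.betaIntegral a b
      = ↑(∫ x in (0:ℝ)..1, x ^ (a - 1) * (1 - x) ^ (b - 1)) := by
    rw [Complex.betaIntegral, ← integral_ofReal]
    refine integral_congr fun x hx => ?_
    rw [uIcc_of_le zero_le_one] at hx
    rw [Complex.ofReal_mul, Complex.ofReal_cpow hx.1, Complex.ofReal_cpow (by linarith [hx.2])]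
    push_cast
    rfl
  rw [ProbabilityTheory.beta_eq_betaIntegralReal a b ha hb, h, Complex.ofReal_re]

noncomputable def mobiusMap (s x : ℝ) : ℝ := x / (1 - (1 - x) * s)

section Mobius

variable {s x : ℝ}

theorem one_sub_one_sub_mul_pos (hs : s < 1) (hx : x ∈ Icc (0:ℝ) 1) :
    0 < 1 - (1 - x) * s := by
  rcases le_or_gt s 0 with hs0 | hs0 <;> nlinarith [hx.1, hx.2]

theorem one_sub_mobiusMap (hd : 1 - (1 - x) * s ≠ 0) :
    1 - mobiusMap s x = (1 - s) * (1 - x) / (1 - (1 - x) * s) := by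
  rw [mobiusMap, eq_div_iff hd, sub_mul, div_mul_cancel₀ _ hd]
  ring

theorem hasDerivAt_mobiusMap (hd : 1 - (1 - x) * s ≠ 0) :
    HasDerivAt (mobiusMap s) ((1 - s) / (1 - (1 - x) * s) ^ 2) x := by
  have hden : HasDerivAt (fun y : ℝ => 1 - (1 - y) * s) s x := by
    simpa using ((hasDerivAt_id x).const_sub 1 |>.mul_const s).const_sub 1
  exact ((hasDerivAt_id' x).div hden hd).congr_deriv (by ring)

theorem mapsTo_mobiusMap (hs : s < 1) : MapsTo (mobiusMap s) (Ioo 0 1) (Ioo 0 1) := by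
  intro x hx
  have hd := one_sub_one_sub_mul_pos hs (Ioo_subset_Icc_self hx)
  exact ⟨div_pos hx.1 hd, (div_lt_one hd).2 (by nlinarith [hx.1, hx.2])⟩

theorem injOn_mobiusMap (hs : s < 1) : InjOn (mobiusMap s) (Ioo 0 1) := by
  intro x hx y hy hxy
  have hdx := one_sub_one_sub_mul_pos hs (Ioo_subset_Icc_self hx)
  have hdy := one_sub_one_sub_mul_pos hs (Ioo_subset_Icc_self hy)
  rw [mobiusMap, mobiusMap, div_eq_div_iff hdx.ne' hdy.ne'] at hxy
  have : (1 - s) * (x - y) = 0 := by linear_combination hxy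
  linarith [(mul_eq_zero.1 this).resolve_left (by linarith)]

theorem image_mobiusMap_Ioo (hs : s < 1) : mobiusMap s '' Ioo 0 1 = Ioo 0 1 := by
  refine (mapsTo_mobiusMap hs).image_subset.antisymm ?_
  have hcont : ContinuousOn (mobiusMap s) (Icc 0 1) := fun x hx =>
    (hasDerivAt_mobiusMap (one_sub_one_sub_mul_pos hs hx).ne').continuousAt.continuousWithinAt
  simpa [mobiusMap] using intermediate_value_Ioo zero_le_one hcont

theorem abs_deriv_mul_rpow_mobiusMap (a b : ℝ) (hs : s < 1) (hx : x ∈ Ioo (0:ℝ) 1) :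
    |(1 - s) / (1 - (1 - x) * s) ^ 2| *
        (mobiusMap s x ^ (a - 1) * (1 - mobiusMap s x) ^ (b - 1))
      = (1 - s) ^ b * (x ^ (a - 1) * (1 - x) ^ (b - 1) / (1 - (1 - x) * s) ^ (a + b)) := by
  have hd := one_sub_one_sub_mul_pos hs (Ioo_subset_Icc_self hx)
  have hs' : 0 < 1 - s := by linarith
  have hx' : 0 < 1 - x := by linarith [hx.2]
  rw [one_sub_mobiusMap hd.ne', mobiusMap, abs_of_pos (by positivity),
    div_rpow hx.1.le hd.le, div_rpow (by positivity) hd.le, mul_rpow hs'.le hx'.le,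
    rpow_add hd, rpow_sub_one hd.ne', rpow_sub_one hd.ne', rpow_sub_one hs'.ne']
  generalize 1 - (1 - x) * s = d at hd ⊢
  field_simp

theorem integral_rpow_mul_one_sub_rpow_div_rpow (a b : ℝ) (hs : s < 1) :
    ∫ x in (0:ℝ)..1, x ^ (a - 1) * (1 - x) ^ (b - 1) / (1 - (1 - x) * s) ^ (a + b)
      = (∫ x in (0:ℝ)..1, x ^ (a - 1) * (1 - x) ^ (b - 1)) / (1 - s) ^ b := by
  have hs' : 0 < 1 - s := by linarith
  rw [eq_div_iff (by positivity), integral_of_le zero_le_one, integral_of_le zero_le_one,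
    integral_Ioc_eq_integral_Ioo, integral_Ioc_eq_integral_Ioo]
  calc (∫ x in Ioo 0 1, x ^ (a - 1) * (1 - x) ^ (b - 1) / (1 - (1 - x) * s) ^ (a + b))
        * (1 - s) ^ b
      = ∫ x in Ioo 0 1, |(1 - s) / (1 - (1 - x) * s) ^ 2| •
          (mobiusMap s x ^ (a - 1) * (1 - mobiusMap s x) ^ (b - 1)) := by
        rw [← MeasureTheory.integral_mul_const]
        refine setIntegral_congr_fun measurableSet_Ioo fun x hx => ?_
        rw [smul_eq_mul, abs_deriv_mul_rpow_mobiusMap a b hs hx, mul_comm]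
    _ = ∫ x in mobiusMap s '' Ioo 0 1, x ^ (a - 1) * (1 - x) ^ (b - 1) :=
        (integral_image_eq_integral_abs_deriv_smul measurableSet_Ioo
          (fun x hx => (hasDerivAt_mobiusMap
            (one_sub_one_sub_mul_pos hs (Ioo_subset_Icc_self hx)).ne').hasDerivWithinAt)
          (injOn_mobiusMap hs) fun x => x ^ (a - 1) * (1 - x) ^ (b - 1)).symm
    _ = ∫ x in Ioo 0 1, x ^ (a - 1) * (1 - x) ^ (b - 1) := by rw [image_mobiusMap_Ioo hs]

end Mobius

theorem sibuya_beta_geometric_mixture_pgf_general (α : ℝ) (hα0 : 0 < α) (hα1 : α < 1)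
    (s : ℝ) (hs1 : s < 1) :
    ∫ x in (0:ℝ)..1,
        (x * s / (1 - (1 - x) * s)) *
          (x ^ (α - 1) * (1 - x) ^ (-α) / (Real.Gamma α * Real.Gamma (1 - α)))
      = 1 - (1 - s) ^ α := by
  set C := Real.Gamma α * Real.Gamma (1 - α)
  have hC : C ≠ 0 := (mul_pos (Gamma_pos_of_pos hα0) (Gamma_pos_of_pos (by linarith))).ne'
  have hs' : 0 < 1 - s := by linarith
  have hβ : ∫ x in (0:ℝ)..1, x ^ (α - 1) * (1 - x) ^ (-α) = C := by
    simpa [ProbabilityTheory.beta, C] using integral_rpow_mul_one_sub_rpow hα0 (sub_pos.2 hα1)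
  have hβd : ∫ x in (0:ℝ)..1, x ^ (α - 1) * (1 - x) ^ (-α) / (1 - (1 - x) * s)
      = C / (1 - s) ^ (1 - α) := by
    simpa [hβ] using integral_rpow_mul_one_sub_rpow_div_rpow α (1 - α) hs1
  have hsplit : ∀ x ∈ uIcc (0:ℝ) 1,
      x * s / (1 - (1 - x) * s) * (x ^ (α - 1) * (1 - x) ^ (-α) / C)
        = (x ^ (α - 1) * (1 - x) ^ (-α)
            - (1 - s) * (x ^ (α - 1) * (1 - x) ^ (-α) / (1 - (1 - x) * s))) / C := by
    intro x hx
    rw [uIcc_of_le zero_le_one] at hx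
    have hd := (one_sub_one_sub_mul_pos hs1 hx).ne'
    rw [show x * s = 1 - (1 - x) * s - (1 - s) by ring, sub_div, div_self hd]
    ring
  rw [integral_congr hsplit, intervalIntegral.integral_div, intervalIntegral.integral_sub,
    intervalIntegral.integral_const_mul, hβ, hβd]
  · have hpow : (1 - s) / (1 - s) ^ (1 - α) = (1 - s) ^ α := by
      rw [div_eq_iff (by positivity), ← rpow_add hs', add_sub_cancel, rpow_one]
    rw [mul_div_left_comm, hpow]
    field_simp
  -- both integrals are nonzero, so both integrands are integrable
  · exact intervalIntegrable_of_integral_ne_zero (hβ ▸ hC)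
  · exact (intervalIntegrable_of_integral_ne_zero
      (hβd ▸ div_ne_zero hC (by positivity))).const_mul _

/-- If `B ~ Beta(α, 1-α)` and, conditionally on `B = p`, `Y` is geometric on `{1,2,…}`
with success probability `p`, then the pgf of `Y` is the Sibuya pgf `1-(1-s)^α`. -/
theorem sibuya_beta_geometric_mixture_pgf (α : ℝ) (hα0 : 0 < α) (hα1 : α < 1)
    (s : ℝ) (hs0 : 0 < s) (hs1 : s < 1) :
    ∫ x in (0:ℝ)..1,
        (x * s / (1 - (1 - x) * s)) *
          (x ^ (α - 1) * (1 - x) ^ (-α) / (Real.Gamma α * Real.Gamma (1 - α)))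
      = 1 - (1 - s) ^ α :=
  sibuya_beta_geometric_mixture_pgf_general α hα0 hα1 s hs1
end

section
/- Let 3 < α < 4 and set w_k = (-1)^k binom(α,k) for k ≥ 1. Then w_1 = -α < 0, w_2 = Γ(α+1)/(2Γ(α-1)) > 0, w_3 = -Γ(α+1)/(6Γ(α-2)) < 0, w_k > 0 for every integer k ≥ 4, and the sum of the positive weights equals W_+ := w_2 + Σ_{k=4}^∞ w_k = α - 1 + Γ(α+1)/(6Γ(α-2)). -/
open Real Filter

lemma genBinom_zero (a : ℝ) : genBinom a 0 = 1 := by simp [genBinom]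

lemma genBinom_succ (a : ℝ) (n : ℕ) :
    genBinom a (n + 1) = genBinom a n * (a - n) / (n + 1) := by
  simp only [genBinom, Finset.prod_range_succ, Nat.factorial_succ, Nat.cast_mul,
    Nat.cast_add, Nat.cast_one]
  rw [div_mul_eq_mul_div, div_div]
  rw [mul_comm ((n:ℝ)+1)]

lemma prod_shift (a : ℝ) (n : ℕ) :
    (∏ j ∈ Finset.range (n + 1), (a - (j : ℝ))) =
      a * ∏ j ∈ Finset.range n, (a - 1 - (j : ℝ)) := by
  rw [Finset.prod_range_succ' (fun j => a - (j : ℝ)) n]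
  simp only [Nat.cast_zero, sub_zero, Nat.cast_add, Nat.cast_one]
  rw [mul_comm]
  congr 1
  exact Finset.prod_congr rfl (fun j _ => by ring)

lemma genBinom_mul (a : ℝ) (n : ℕ) :
    genBinom a (n + 1) = a * genBinom (a - 1) n / (n + 1) := by
  simp only [genBinom, prod_shift, Nat.factorial_succ, Nat.cast_mul, Nat.cast_add, Nat.cast_one]
  rw [mul_div_assoc, mul_div_assoc, div_div, mul_comm ((n:ℝ)+1)]

lemma genBinom_pascal (a : ℝ) (n : ℕ) :
    genBinom a (n + 1) = genBinom (a - 1) (n + 1) + genBinom (a - 1) n := by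
  have h1 : ((n : ℝ) + 1) ≠ 0 := by positivity
  rw [genBinom_succ (a - 1) n, genBinom_mul a n]
  field_simp
  ring

lemma partial_sum (a : ℝ) (n : ℕ) :
    ∑ k ∈ Finset.range (n + 1), (-1 : ℝ) ^ k * genBinom a k
      = (-1) ^ n * genBinom (a - 1) n := by
  induction n with
  | zero => simp [genBinom_zero]
  | succ n ih =>
    rw [Finset.sum_range_succ, ih, genBinom_pascal a n]
    ring

lemma neg_pow_prod (a : ℝ) (k : ℕ) :
    (-1 : ℝ) ^ k * (∏ j ∈ Finset.range k, (a - (j : ℝ)))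
      = ∏ j ∈ Finset.range k, ((j : ℝ) - a) := by
  induction k with
  | zero => simp
  | succ n ih =>
    rw [Finset.prod_range_succ, Finset.prod_range_succ, ← ih]
    ring

lemma prod_pos_of_ge_four (α : ℝ) (hα1 : 3 < α) (hα2 : α < 4) :
    ∀ k : ℕ, 4 ≤ k → 0 < ∏ j ∈ Finset.range k, ((j : ℝ) - α) := by
  intro k hk
  induction k, hk using Nat.le_induction with
  | base =>
    have h : (∏ j ∈ Finset.range 4, ((j:ℝ) - α)) = α * (α-1) * ((α-2) * (α-3)) := by
      simp [Finset.prod_range_succ]; ring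
    rw [h]
    have := mul_pos (mul_pos (by linarith : (0:ℝ) < α) (by linarith : (0:ℝ) < α - 1))
      (mul_pos (by linarith : (0:ℝ) < α - 2) (by linarith : (0:ℝ) < α - 3))
    exact this
  | succ n hn ih =>
    rw [Finset.prod_range_succ]
    have hfac : (0:ℝ) < (n:ℝ) - α := by
      have : (4:ℝ) ≤ (n:ℝ) := by exact_mod_cast hn
      linarith
    exact mul_pos ih hfac

/-- For `3 < α < 4`, the GL weights satisfy `w_1 = -α < 0`,
`w_2 = Γ(α+1)/(2Γ(α-1)) > 0`, `w_3 = -Γ(α+1)/(6Γ(α-2)) < 0`, `w_k > 0` for `k ≥ 4`,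
and the sum of positive weights is
`W_+ = w_2 + Σ_{k≥4} w_k = α - 1 + Γ(α+1)/(6Γ(α-2))`. -/
theorem gl_weights_three_lt_alpha_lt_four (α : ℝ) (hα1 : 3 < α) (hα2 : α < 4) :
    ((-1 : ℝ) ^ 1 * genBinom α 1 = -α) ∧ (-α < 0) ∧
    ((-1 : ℝ) ^ 2 * genBinom α 2 = Real.Gamma (α + 1) / (2 * Real.Gamma (α - 1))) ∧
    (0 < Real.Gamma (α + 1) / (2 * Real.Gamma (α - 1))) ∧
    ((-1 : ℝ) ^ 3 * genBinom α 3 = -(Real.Gamma (α + 1) / (6 * Real.Gamma (α - 2)))) ∧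
    (-(Real.Gamma (α + 1) / (6 * Real.Gamma (α - 2))) < 0) ∧
    (∀ k : ℕ, 4 ≤ k → 0 < (-1 : ℝ) ^ k * genBinom α k) ∧
    Summable (fun k : ℕ => (-1 : ℝ) ^ (k + 4) * genBinom α (k + 4)) ∧
    ((-1 : ℝ) ^ 2 * genBinom α 2 + ∑' k : ℕ, (-1 : ℝ) ^ (k + 4) * genBinom α (k + 4)
        = α - 1 + Real.Gamma (α + 1) / (6 * Real.Gamma (α - 2))) := by
  -- Gamma facts
  have hG2 : Real.Gamma (α - 2) ≠ 0 := ne_of_gt (Real.Gamma_pos_of_pos (by linarith))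
  have hG1pos : 0 < Real.Gamma (α - 1) := Real.Gamma_pos_of_pos (by linarith)
  have hGa1 : Real.Gamma (α + 1) = α * Real.Gamma α := Real.Gamma_add_one (by linarith)
  have hGa : Real.Gamma α = (α - 1) * Real.Gamma (α - 1) := by
    have := Real.Gamma_add_one (ne_of_gt (show (0:ℝ) < α - 1 by linarith))
    simpa using this
  have hGa2 : Real.Gamma (α - 1) = (α - 2) * Real.Gamma (α - 2) := by
    have := Real.Gamma_add_one (ne_of_gt (show (0:ℝ) < α - 2 by linarith))
    have h2 : α - 2 + 1 = α - 1 := by ring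
    rwa [h2] at this
  have hKey1 : Real.Gamma (α + 1) / (2 * Real.Gamma (α - 1)) = α * (α - 1) / 2 := by
    rw [hGa1, hGa]
    field_simp
  have hKey2 : Real.Gamma (α + 1) / (6 * Real.Gamma (α - 2)) = α * (α - 1) * (α - 2) / 6 := by
    rw [hGa1, hGa, hGa2]
    field_simp
  -- small genBinom values
  have hg1 : genBinom α 1 = α := by simp [genBinom]
  have hg2 : (-1:ℝ)^2 * genBinom α 2 = α * (α - 1) / 2 := by
    simp [genBinom, Finset.prod_range_succ]
  have hfact3 : ((Nat.factorial 3 : ℕ) : ℝ) = 6 := by norm_num [Nat.factorial]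
  have hg3 : genBinom α 3 = α * (α - 1) * (α - 2) / 6 := by
    simp only [genBinom, Finset.prod_range_succ, Finset.prod_range_zero, one_mul, hfact3]
    norm_num
  -- positivity for k ≥ 4
  have hpos : ∀ k : ℕ, 4 ≤ k → 0 < (-1 : ℝ) ^ k * genBinom α k := by
    intro k hk
    have h1 : (-1:ℝ)^k * genBinom α k
        = (∏ j ∈ Finset.range k, ((j : ℝ) - α)) / (Nat.factorial k : ℝ) := by
      rw [genBinom, ← neg_pow_prod α k, mul_div_assoc]
    rw [h1]
    exact div_pos (prod_pos_of_ge_four α hα1 hα2 k hk)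
      (by exact_mod_cast Nat.factorial_pos k)
  -- decay of g n = genBinom (α-1) n
  set g : ℕ → ℝ := fun n => genBinom (α - 1) n with hgdef
  have hbound : ∀ n : ℕ, 4 ≤ n → (n : ℝ) * |g n| ≤ 4 * |g 4| := by
    intro n hn
    induction n, hn using Nat.le_induction with
    | base => norm_num
    | succ n hn ih =>
      have hn4 : (4:ℝ) ≤ (n:ℝ) := by exact_mod_cast hn
      have hrec : g (n + 1) = g n * (α - 1 - n) / (n + 1) := genBinom_succ (α - 1) n
      have habs : |g (n + 1)| = |g n| * ((n:ℝ) + 1 - α) / ((n:ℝ) + 1) := by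
        rw [hrec, abs_div, abs_mul, abs_of_pos (by linarith : (0:ℝ) < (n:ℝ) + 1),
          abs_of_neg (by linarith : α - 1 - (n:ℝ) < 0)]
        ring_nf
      have hcast : ((n : ℕ) + 1 : ℝ) = (n:ℝ) + 1 := by push_cast; ring
      rw [Nat.cast_add, Nat.cast_one, habs]
      rw [mul_div_assoc', mul_comm ((n:ℝ)+1), mul_div_assoc, div_self (by linarith : (n:ℝ)+1 ≠ 0), mul_one]
      have h1 : |g n| * ((n:ℝ) + 1 - α) ≤ |g n| * (n:ℝ) :=
        mul_le_mul_of_nonneg_left (by linarith) (abs_nonneg _)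
      calc |g n| * ((n:ℝ) + 1 - α) ≤ |g n| * (n:ℝ) := h1
        _ = (n:ℝ) * |g n| := by ring
        _ ≤ 4 * |g 4| := ih
  have habs_tendsto : Tendsto (fun n : ℕ => |g n|) atTop (nhds 0) := by
    apply squeeze_zero' (Filter.Eventually.of_forall fun n => abs_nonneg _)
      (g := fun n : ℕ => (4 * |g 4|) / (n : ℝ))
    · filter_upwards [Filter.eventually_ge_atTop 4] with n hn
      have hnpos : (0:ℝ) < (n:ℝ) := by
        have : (4:ℝ) ≤ (n:ℝ) := by exact_mod_cast hn
        linarith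
      rw [le_div_iff₀ hnpos, mul_comm]
      exact hbound n hn
    · exact tendsto_const_div_atTop_nhds_zero_nat (4 * |g 4|)
  have hg_tendsto : Tendsto g atTop (nhds 0) :=
    (tendsto_zero_iff_abs_tendsto_zero g).2 habs_tendsto
  -- partial sums of the tail
  set f : ℕ → ℝ := fun k => (-1 : ℝ) ^ (k + 4) * genBinom α (k + 4) with hfdef
  have hfpos : ∀ k : ℕ, 0 < f k := fun k => hpos (k + 4) (by omega)
  have hT : ∀ N : ℕ, ∑ k ∈ Finset.range N, f k = (-1:ℝ)^(N+3) * g (N+3) + g 3 := by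
    intro N
    have hsplit := Finset.sum_range_add (fun k => (-1:ℝ)^k * genBinom α k) 4 N
    have h4 : ∑ k ∈ Finset.range 4, (-1:ℝ)^k * genBinom α k = (-1:ℝ)^3 * g 3 :=
      partial_sum α 3
    have hN4 : ∑ k ∈ Finset.range (4 + N), (-1:ℝ)^k * genBinom α k
        = (-1:ℝ)^(N+3) * g (N+3) := by
      have : 4 + N = (N + 3) + 1 := by omega
      rw [this]
      exact partial_sum α (N + 3)
    have hfix : ∑ k ∈ Finset.range N, (fun k => (-1:ℝ)^k * genBinom α k) (4 + k)
        = ∑ k ∈ Finset.range N, f k := by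
      apply Finset.sum_congr rfl
      intro k _
      simp only [hfdef]
      rw [add_comm 4 k]
    rw [hN4, h4, hfix] at hsplit
    linarith [hsplit]
  have hTlim : Tendsto (fun N => ∑ k ∈ Finset.range N, f k) atTop (nhds (g 3)) := by
    have h1 : Tendsto (fun N : ℕ => (-1:ℝ)^(N+3) * g (N+3)) atTop (nhds 0) := by
      apply squeeze_zero_norm _ (habs_tendsto.comp (tendsto_add_atTop_nat 3))
      intro n
      simp only [norm_mul, norm_pow, norm_neg, norm_one, one_pow, one_mul, Function.comp]
      simp [Real.norm_eq_abs]
    have := h1.add_const (g 3)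
    simp only [zero_add] at this
    convert this using 1
    funext N
    exact hT N
  have hmono : Monotone (fun N => ∑ k ∈ Finset.range N, f k) := by
    apply monotone_nat_of_le_succ
    intro n
    rw [Finset.sum_range_succ]
    linarith [le_of_lt (hfpos n)]
  have hle : ∀ N, ∑ k ∈ Finset.range N, f k ≤ g 3 := fun N =>
    hmono.ge_of_tendsto hTlim N
  have hsummable : Summable f :=
    summable_of_sum_range_le (fun k => le_of_lt (hfpos k)) hle
  have htsum : ∑' k, f k = g 3 :=
    tendsto_nhds_unique hsummable.hasSum.tendsto_sum_nat hTlim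
  -- g 3 value
  have hg3val : g 3 = (α - 1) * (α - 2) * (α - 3) / 6 := by
    simp only [hgdef, genBinom, Finset.prod_range_succ, Finset.prod_range_zero, one_mul, hfact3]
    norm_num
    ring
  refine ⟨by rw [hg1]; ring, by linarith, by rw [hKey1]; exact hg2,
    by rw [hKey1]; have : 0 < α * (α-1) := mul_pos (by linarith) (by linarith); linarith,
    ?_, ?_, hpos, hsummable, ?_⟩
  · rw [hKey2, hg3]; ring
  · rw [hKey2]
    have : 0 < α * (α - 1) * (α - 2) :=
      mul_pos (mul_pos (by linarith) (by linarith)) (by linarith)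
    linarith
  · have : (∑' k : ℕ, (-1 : ℝ) ^ (k + 4) * genBinom α (k + 4)) = g 3 := htsum
    rw [this, hKey2, hg2, hg3val]
    ring
end

section
/- Let α > 0 and β > 0, let h > 0, t ∈ ℝ, and let f : ℝ → ℝ be a bounded function. Then the semigroup property Δ_h^α (Δ_h^β f)(t) = Δ_h^{α+β} f(t) holds, where Δ_h^γ f(t) = Σ_{k=0}^∞ (-1)^k binom(γ,k) f(t-kh); all the series involved converge absolutely. -/
open Real

open Finset

/-! Both sides are regroupings of the double series
`Σ_{k,j} (-1)^(k+j) binom(α,k) binom(β,j) f(t - (k+j)h)`, which converges absolutely because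
`f` is bounded and `Σ_k |binom(γ,k)| < ∞` for `γ > 0`. Summing it first over `j` gives the
left-hand side; summing it along the antidiagonals `k + j = n` and applying the Chu–Vandermonde
identity `Σ_{k+j=n} binom(α,k) binom(β,j) = binom(α+β,n)` gives the right-hand side.

The absolute summability of `binom(γ,k)` is a telescoping argument: for `k ≥ γ` the recurrence
`(k+1) binom(γ,k+1) = (γ-k) binom(γ,k)` gives
`γ |binom(γ,k)| = k |binom(γ,k)| - (k+1) |binom(γ,k+1)|`.
-/

theorem summable_of_le_sub_succ {b c : ℕ → ℝ} (hb : ∀ k, 0 ≤ b k) (hc : ∀ k, 0 ≤ c k)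
    (hbc : ∀ k, b k ≤ c k - c (k + 1)) : Summable b :=
  summable_of_sum_range_le hb fun n =>
    calc ∑ k ∈ range n, b k ≤ ∑ k ∈ range n, (c k - c (k + 1)) := sum_le_sum fun k _ => hbc k
      _ = c 0 - c n := sum_range_sub' c n
      _ ≤ c 0 := sub_le_self _ (hc n)

theorem summable_abs_mul_of_abs_le {a g : ℕ → ℝ} {M : ℝ} (ha : Summable fun k => |a k|)
    (hg : ∀ k, |g k| ≤ M) : Summable fun k => |a k * g k| :=
  (ha.mul_right M).of_nonneg_of_le (fun _ => abs_nonneg _) fun k => by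
    rw [abs_mul]; exact mul_le_mul_of_nonneg_left (hg k) (abs_nonneg _)

theorem abs_tsum_mul_le {a g : ℕ → ℝ} {M : ℝ} (ha : Summable fun k => |a k|)
    (hg : ∀ k, |g k| ≤ M) : |∑' k, a k * g k| ≤ (∑' k, |a k|) * M :=
  tsum_of_norm_bounded (ha.hasSum.mul_right M) fun k => by
    rw [Real.norm_eq_abs, abs_mul]; exact mul_le_mul_of_nonneg_left (hg k) (abs_nonneg _)

theorem Summable.tsum_prod_eq_tsum_sum_antidiagonal {E : Type*} [AddCommGroup E] [UniformSpace E]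
    [IsUniformAddGroup E] [CompleteSpace E] [T0Space E] {g : ℕ × ℕ → E} (hg : Summable g) :
    ∑' p, g p = ∑' n, ∑ kl ∈ antidiagonal n, g kl := by
  rw [← HasAntidiagonal.sigmaAntidiagonalEquivProd.tsum_eq g]
  exact (HasAntidiagonal.sigmaAntidiagonalEquivProd.summable_iff.mpr hg).tsum_sigma.trans
    (tsum_congr fun n => tsum_subtype _ _)

theorem tsum_mul_tsum_add_eq_tsum_sum_antidiagonal {a b F : ℕ → ℝ} {M : ℝ}
    (ha : Summable fun k => |a k|) (hb : Summable fun j => |b j|) (hF : ∀ n, |F n| ≤ M) :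
    ∑' k, a k * ∑' j, b j * F (k + j) = ∑' n, (∑ kl ∈ antidiagonal n, a kl.1 * b kl.2) * F n := by
  set g : ℕ × ℕ → ℝ := fun p => a p.1 * (b p.2 * F (p.1 + p.2))
  have hg : Summable g := by
    refine Summable.of_norm_bounded
      ((ha.mul_of_nonneg hb (fun _ => abs_nonneg _) fun _ => abs_nonneg _).mul_right M) fun p => ?_
    simp only [g, Real.norm_eq_abs, abs_mul, mul_assoc]
    gcongr
    exact hF _
  calc ∑' k, a k * ∑' j, b j * F (k + j) = ∑' p, g p := by
        rw [hg.tsum_prod]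
        exact tsum_congr fun k => tsum_mul_left.symm
    _ = ∑' n, ∑ kl ∈ antidiagonal n, g kl := hg.tsum_prod_eq_tsum_sum_antidiagonal
    _ = ∑' n, (∑ kl ∈ antidiagonal n, a kl.1 * b kl.2) * F n := tsum_congr fun n => by
        rw [sum_mul]
        refine sum_congr rfl fun kl hkl => ?_
        simp only [g, mem_antidiagonal.mp hkl]
        ring

theorem genBinom_eq_choose (a : ℝ) (k : ℕ) : genBinom a k = Ring.choose a k := by
  rw [Ring.choose_eq_smul, genBinom, ← descPochhammer_eval_eq_prod_range,
    ← Polynomial.aeval_eq_smeval, Polynomial.aeval_def, ← Polynomial.eval_map, descPochhammer_map,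
    smul_eq_mul, div_eq_inv_mul]

theorem sum_antidiagonal_neg_one_pow_mul_genBinom (a b : ℝ) (n : ℕ) :
    ∑ kl ∈ antidiagonal n, (-1 : ℝ) ^ kl.1 * genBinom a kl.1 * ((-1) ^ kl.2 * genBinom b kl.2) =
      (-1) ^ n * genBinom (a + b) n := by
  rw [genBinom_eq_choose, Ring.add_choose_eq n (Commute.all a b), mul_sum]
  refine sum_congr rfl fun kl hkl => ?_
  rw [genBinom_eq_choose, genBinom_eq_choose, ← mem_antidiagonal.mp hkl, pow_add]
  ring

theorem genBinom_succ_mul (a : ℝ) (k : ℕ) :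
    genBinom a (k + 1) * (k + 1) = genBinom a k * (a - k) := by
  rw [genBinom, genBinom, prod_range_succ, Nat.factorial_succ]
  push_cast
  field_simp

theorem abs_genBinom_succ_mul {γ : ℝ} {k : ℕ} (hk : γ ≤ k) :
    |genBinom γ (k + 1)| * (k + 1) = |genBinom γ k| * (k - γ) := by
  have h := congrArg abs (genBinom_succ_mul γ k)
  rwa [abs_mul, abs_mul, abs_of_nonneg (by positivity : (0 : ℝ) ≤ k + 1), abs_sub_comm,
    abs_of_nonneg (sub_nonneg.mpr hk)] at h

theorem summable_abs_genBinom {γ : ℝ} (hγ : 0 < γ) : Summable fun k => |genBinom γ k| := by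
  obtain ⟨N, hN⟩ : ∃ N : ℕ, γ ≤ N := ⟨⌈γ⌉₊, Nat.le_ceil γ⟩
  rw [← summable_nat_add_iff N]
  refine summable_of_le_sub_succ (c := fun k => ((k + N : ℕ) : ℝ) * |genBinom γ (k + N)| / γ)
    (fun _ => abs_nonneg _) (fun _ => by positivity) fun k => le_of_eq ?_
  have hrec := abs_genBinom_succ_mul (γ := γ) (k := k + N)
    (hN.trans (by exact_mod_cast Nat.le_add_left N k))
  rw [Nat.add_right_comm k 1 N]
  field_simp
  push_cast at hrec ⊢
  linarith

theorem fractional_difference_semigroup_general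
    (α β : ℝ) (hα : 0 < α) (hβ : 0 < β) (h : ℝ) (t : ℝ)
    (f : ℝ → ℝ) (hf_bdd : ∃ M : ℝ, ∀ x, |f x| ≤ M) :
    (∀ s : ℝ, Summable (fun k : ℕ => |(-1 : ℝ) ^ k * genBinom β k * f (s - (k : ℝ) * h)|)) ∧
    Summable (fun k : ℕ => |(-1 : ℝ) ^ k * genBinom α k *
      (∑' j : ℕ, (-1 : ℝ) ^ j * genBinom β j * f (t - (k : ℝ) * h - (j : ℝ) * h))|) ∧
    Summable (fun k : ℕ => |(-1 : ℝ) ^ k * genBinom (α + β) k * f (t - (k : ℝ) * h)|) ∧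
    (∑' k : ℕ, (-1 : ℝ) ^ k * genBinom α k *
        (∑' j : ℕ, (-1 : ℝ) ^ j * genBinom β j * f (t - (k : ℝ) * h - (j : ℝ) * h))
      = ∑' k : ℕ, (-1 : ℝ) ^ k * genBinom (α + β) k * f (t - (k : ℝ) * h)) := by
  obtain ⟨M, hM⟩ := hf_bdd
  have hcoeff : ∀ {γ : ℝ}, 0 < γ → Summable fun k : ℕ => |(-1 : ℝ) ^ k * genBinom γ k| := by
    intro γ hγ
    simpa only [abs_mul, abs_pow, abs_neg, abs_one, one_pow, one_mul] using summable_abs_genBinom hγ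
  have hinner (s : ℝ) : |∑' j : ℕ, (-1 : ℝ) ^ j * genBinom β j * f (s - (j : ℝ) * h)| ≤
      (∑' j : ℕ, |(-1 : ℝ) ^ j * genBinom β j|) * M :=
    abs_tsum_mul_le (hcoeff hβ) fun _ => hM _
  refine ⟨fun s => summable_abs_mul_of_abs_le (hcoeff hβ) fun _ => hM _,
    summable_abs_mul_of_abs_le (hcoeff hα) fun k => hinner (t - k * h),
    summable_abs_mul_of_abs_le (hcoeff (add_pos hα hβ)) fun _ => hM _, ?_⟩
  have hshift (k j : ℕ) : t - (k : ℝ) * h - (j : ℝ) * h = t - ((k + j : ℕ) : ℝ) * h := by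
    push_cast; ring
  simp_rw [hshift]
  refine (tsum_mul_tsum_add_eq_tsum_sum_antidiagonal (hcoeff hα) (hcoeff hβ)
    (F := fun n : ℕ => f (t - n * h)) fun _ => hM _).trans (tsum_congr fun n => ?_)
  rw [sum_antidiagonal_neg_one_pow_mul_genBinom]

/-- Semigroup property of fractional differences: for bounded `f` and `α, β > 0`,
`Δ_h^α (Δ_h^β f)(t) = Δ_h^{α+β} f(t)`, with all series converging absolutely. -/
theorem fractional_difference_semigroup
    (α β : ℝ) (hα : 0 < α) (hβ : 0 < β) (h : ℝ) (hh : 0 < h) (t : ℝ)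
    (f : ℝ → ℝ) (hf_bdd : ∃ M : ℝ, ∀ x, |f x| ≤ M) :
    (∀ s : ℝ, Summable (fun k : ℕ => |(-1 : ℝ) ^ k * genBinom β k * f (s - (k : ℝ) * h)|)) ∧
    Summable (fun k : ℕ => |(-1 : ℝ) ^ k * genBinom α k *
      (∑' j : ℕ, (-1 : ℝ) ^ j * genBinom β j * f (t - (k : ℝ) * h - (j : ℝ) * h))|) ∧
    Summable (fun k : ℕ => |(-1 : ℝ) ^ k * genBinom (α + β) k * f (t - (k : ℝ) * h)|) ∧
    (∑' k : ℕ, (-1 : ℝ) ^ k * genBinom α k *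
        (∑' j : ℕ, (-1 : ℝ) ^ j * genBinom β j * f (t - (k : ℝ) * h - (j : ℝ) * h))
      = ∑' k : ℕ, (-1 : ℝ) ^ k * genBinom (α + β) k * f (t - (k : ℝ) * h)) :=
  fractional_difference_semigroup_general α β hα hβ h t f hf_bdd
end
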